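/- Let f be a piecewise contracting map on a compact locally connected metric space with attractor Λ = ⋂_{n≥1} Λ_n. If d(Λ, Δ) > 0 (or if Δ = ∅), then there exists n₀ ≥ 1 such that every atom of generation n ≥ n₀ is contained in a single continuity piece X_i. -/
import Mathlib


open Metric Filter Set

/-- One application of the transformation `F_i(A) = closure (f(A ∩ X_i))`. -/
def atomStep {X : Type*} [MetricSpace X] (f : X → X) (P : Set X) (A : Set X) : Set X :=
  closure (f '' (A ∩ P))

/-- The atom with itinerary `l = (i₁, …, iₙ)`: `F_{iₙ} ∘ ⋯ ∘ F_{i₁}(X)`. -/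
def atomOf {X : Type*} [MetricSpace X] {N : ℕ} (f : X → X) (P : Fin N → Set X)
    (l : List (Fin N)) : Set X :=
  l.foldl (fun A i => atomStep f (P i) A) Set.univ

/-- `Λₙ`: the union of all atoms of generation `n`. -/
def LamN {X : Type*} [MetricSpace X] {N : ℕ} (f : X → X) (P : Fin N → Set X) (n : ℕ) : Set X :=
  ⋃ l ∈ {l : List (Fin N) | l.length = n}, atomOf f P l

/-- The attractor `Λ = ⋂_{n ≥ 1} Λₙ`. -/
def Lam {X : Type*} [MetricSpace X] {N : ℕ} (f : X → X) (P : Fin N → Set X) : Set X :=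
  ⋂ n ∈ {n : ℕ | 1 ≤ n}, LamN f P n

/-- `X̃ = ⋂ₙ f⁻ⁿ(X \ Δ)` where `X \ Δ = ⋃ᵢ Xᵢ`. -/
def tildeSet {X : Type*} {N : ℕ} (f : X → X) (P : Fin N → Set X) : Set X :=
  ⋂ n : ℕ, f^[n] ⁻¹' (⋃ i, P i)

/-- A point is non-wandering if orbits of `X̃`-points in each ball return to it
at arbitrarily large times. -/
def nonwandering {X : Type*} [MetricSpace X] {N : ℕ} (f : X → X) (P : Fin N → Set X)
    (x : X) : Prop :=
  ∀ ε > 0, ∀ m : ℕ, ∃ n ≥ m, (f^[n] '' (ball x ε ∩ tildeSet f P) ∩ ball x ε).Nonempty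

/-- The ω-limit set of a point. -/
def omegaSet {X : Type*} [MetricSpace X] (f : X → X) (x : X) : Set X :=
  {y | MapClusterPt y atTop fun n : ℕ => f^[n] x}

/-- The limit set `L`. -/
def limitSet {X : Type*} [MetricSpace X] {N : ℕ} (f : X → X) (P : Fin N → Set X) : Set X :=
  closure (⋃ x ∈ tildeSet f P, omegaSet f x)

section Aux

variable {X : Type*} [MetricSpace X] {N : ℕ} (f : X → X) (P : Fin N → Set X)

lemma atomStep_mono {Q A B : Set X} (h : A ⊆ B) : atomStep f Q A ⊆ atomStep f Q B :=
  closure_mono (Set.image_mono (Set.inter_subset_inter_left _ h))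

lemma foldl_atomStep_mono : ∀ (l : List (Fin N)) {A B : Set X}, A ⊆ B →
    l.foldl (fun A i => atomStep f (P i) A) A ⊆ l.foldl (fun A i => atomStep f (P i) A) B
  | [], _, _, h => h
  | _ :: l, _, _, h => foldl_atomStep_mono l (atomStep_mono f h)

lemma atomOf_cons_subset (i : Fin N) (l : List (Fin N)) :
    atomOf f P (i :: l) ⊆ atomOf f P l :=
  foldl_atomStep_mono f P l (Set.subset_univ _)

lemma LamN_antitone : Antitone (LamN f P) := by
  apply antitone_nat_of_succ_le
  intro n x hx
  simp only [LamN, mem_iUnion, mem_setOf_eq] at hx ⊢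
  obtain ⟨l, hl, hxl⟩ := hx
  match l, hl with
  | i :: l, hl =>
    exact ⟨l, Nat.succ_injective hl, atomOf_cons_subset f P i l hxl⟩

lemma isClosed_atomOf (l : List (Fin N)) (hl : l ≠ []) : IsClosed (atomOf f P l) := by
  rcases List.eq_nil_or_concat l with rfl | ⟨l', i, rfl⟩
  · exact absurd rfl hl
  · simp only [atomOf, List.concat_eq_append, List.foldl_append, List.foldl_cons, List.foldl_nil, atomStep]
    exact isClosed_closure

lemma isClosed_LamN (n : ℕ) : IsClosed (LamN f P (n + 1)) := by
  have hfin : {l : List (Fin N) | l.length = n + 1}.Finite := List.finite_length_eq _ _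
  show IsClosed (⋃ l ∈ {l : List (Fin N) | l.length = n + 1}, atomOf f P l)
  exact hfin.isClosed_biUnion fun l hl =>
    isClosed_atomOf f P l (by rintro rfl; simp at hl)

lemma diam_atomStep [CompactSpace X] {lam : ℝ} (hlam0 : 0 ≤ lam) {Q : Set X}
    (hctr : ∀ x ∈ Q, ∀ y ∈ Q, dist (f x) (f y) ≤ lam * dist x y) (A : Set X) :
    Metric.diam (atomStep f Q A) ≤ lam * Metric.diam A := by
  rw [atomStep, Metric.diam_closure]
  apply Metric.diam_le_of_forall_dist_le (mul_nonneg hlam0 Metric.diam_nonneg)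
  rintro _ ⟨x, ⟨hxA, hxQ⟩, rfl⟩ _ ⟨y, ⟨hyA, hyQ⟩, rfl⟩
  have hb : Bornology.IsBounded A := isCompact_univ.isBounded.subset (Set.subset_univ _)
  calc dist (f x) (f y) ≤ lam * dist x y := hctr x hxQ y hyQ
    _ ≤ lam * Metric.diam A :=
      mul_le_mul_of_nonneg_left (Metric.dist_le_diam_of_mem hb hxA hyA) hlam0

lemma diam_foldl_atomStep [CompactSpace X] {lam : ℝ} (hlam0 : 0 ≤ lam)
    (hctr : ∀ i, ∀ x ∈ P i, ∀ y ∈ P i, dist (f x) (f y) ≤ lam * dist x y) :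
    ∀ (l : List (Fin N)) (A : Set X),
      Metric.diam (l.foldl (fun A i => atomStep f (P i) A) A) ≤ lam ^ l.length * Metric.diam A
  | [], A => by simp
  | i :: l, A => by
    have h1 := diam_foldl_atomStep hlam0 hctr l (atomStep f (P i) A)
    have h2 := diam_atomStep f hlam0 (hctr i) A
    simp only [List.foldl_cons, List.length_cons]
    calc Metric.diam (l.foldl (fun A i => atomStep f (P i) A) (atomStep f (P i) A))
        ≤ lam ^ l.length * Metric.diam (atomStep f (P i) A) := h1
      _ ≤ lam ^ l.length * (lam * Metric.diam A) :=
          mul_le_mul_of_nonneg_left h2 (pow_nonneg hlam0 _)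
      _ = lam ^ (l.length + 1) * Metric.diam A := by ring

lemma eventually_LamN_subset [CompactSpace X] {U : Set X} (hU : IsOpen U)
    (hL : Lam f P ⊆ U) : ∃ n₁ : ℕ, ∀ n ≥ n₁, LamN f P n ⊆ U := by
  have hempty : (Set.univ : Set X) ∩ ⋂ n : ℕ, (LamN f P (n + 1) ∩ Uᶜ) = ∅ := by
    rw [Set.univ_inter]
    ext x
    simp only [mem_iInter, mem_inter_iff, mem_empty_iff_false, iff_false, not_forall]
    by_contra h
    push_neg at h
    have hxL : x ∈ Lam f P := by
      simp only [Lam, mem_iInter, mem_setOf_eq]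
      intro n hn
      obtain ⟨m, rfl⟩ := Nat.exists_eq_add_of_le hn
      rw [add_comm]
      exact (h m).1
    exact (h 0).2 (hL hxL)
  obtain ⟨t, ht⟩ := isCompact_univ.elim_finite_subfamily_closed _
    (fun n => (isClosed_LamN f P n).inter hU.isClosed_compl) hempty
  refine ⟨t.sup id + 1, fun n hn x hx => ?_⟩
  by_contra hxU
  have hmem : x ∈ (Set.univ : Set X) ∩ ⋂ m ∈ t, (LamN f P (m + 1) ∩ Uᶜ) := by
    refine ⟨trivial, mem_iInter₂.mpr fun m hm => ⟨?_, hxU⟩⟩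
    have hmn : m + 1 ≤ n :=
      le_trans (Nat.succ_le_succ (Finset.le_sup (f := id) hm)) hn
    exact LamN_antitone f P hmn hx
  rw [ht] at hmem
  exact hmem

lemma uniform_piece [CompactSpace X] [LocallyConnectedSpace X]
    (hop : ∀ i, IsOpen (P i)) (hdisj : ∀ i j, i ≠ j → Disjoint (P i) (P j))
    {K : Set X} (hK : IsClosed K) {η : ℝ} (hη : 0 < η)
    (hball : ∀ a ∈ K, ball a η ⊆ ⋃ i, P i) :
    ∃ r > 0, ∀ a ∈ K, ∃ i, ball a r ⊆ P i := by
  rcases K.eq_empty_or_nonempty with rfl | hKne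
  · exact ⟨1, one_pos, by simp⟩
  have key : ∀ a ∈ K, ∃ ρ > 0, ∃ i, ball a ρ ⊆ P i := by
    intro a ha
    obtain ⟨i, hi⟩ := mem_iUnion.mp (hball a ha (mem_ball_self hη))
    obtain ⟨V, hVsub, hVopen, haV, hVconn⟩ :=
      (locallyConnectedSpace_iff_subsets_isOpen_isConnected.mp inferInstance) a
        (ball a η) (ball_mem_nhds a hη)
    have hVP : V ⊆ P i := by
      apply hVconn.isPreconnected.subset_left_of_subset_union (hop i)
        (isOpen_iUnion fun j => isOpen_iUnion fun _ => hop j)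
      · exact Set.disjoint_iUnion_right.mpr fun j =>
          Set.disjoint_iUnion_right.mpr fun hj => hdisj i j (Ne.symm hj)
      · intro x hx
        obtain ⟨j, hj⟩ := mem_iUnion.mp (hball a ha (hVsub hx))
        rcases eq_or_ne j i with rfl | hji
        · exact Or.inl hj
        · exact Or.inr (mem_iUnion.mpr ⟨j, mem_iUnion.mpr ⟨hji, hj⟩⟩)
      · exact ⟨a, haV, hi⟩
    obtain ⟨ρ, hρ, hρV⟩ := Metric.mem_nhds_iff.mp (hVopen.mem_nhds haV)
    exact ⟨ρ, hρ, i, hρV.trans hVP⟩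
  choose! ρ hρpos idx hidx using key
  have hcover : K ⊆ ⋃ a : K, ball (a : X) (ρ a / 2) := by
    intro a ha
    exact mem_iUnion.mpr ⟨⟨a, ha⟩, mem_ball_self (by linarith [hρpos a ha])⟩
  obtain ⟨t, ht⟩ := hK.isCompact.elim_finite_subcover _ (fun _ => isOpen_ball) hcover
  have htne : t.Nonempty := by
    obtain ⟨a, ha⟩ := hKne
    obtain ⟨c, hc⟩ := mem_iUnion₂.mp (ht ha)
    exact ⟨c, hc.1⟩
  refine ⟨t.inf' htne (fun a => ρ a / 2), ?_, ?_⟩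
  · rw [gt_iff_lt, Finset.lt_inf'_iff]
    intro c _
    linarith [hρpos c c.2]
  · intro a ha
    obtain ⟨c, hct, hac⟩ := mem_iUnion₂.mp (ht ha)
    refine ⟨idx c c.2, fun w hw => hidx c c.2 ?_⟩
    have h1 : dist w a < t.inf' htne (fun a => ρ a / 2) := mem_ball.mp hw
    have h2 : dist a c < ρ c / 2 := mem_ball.mp hac
    have h3 : t.inf' htne (fun a => ρ a / 2) ≤ ρ c / 2 := Finset.inf'_le _ hct
    have : dist w (c : X) < ρ c := by
      calc dist w (c : X) ≤ dist w a + dist a (c : X) := dist_triangle _ _ _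
        _ < ρ c / 2 + ρ c / 2 := by linarith
        _ = ρ c := by ring
    exact mem_ball.mpr this

end Aux

/-- If `Δ = ∅` or `d(Λ, Δ) > 0`, then there is `n₀ ≥ 1` such that every atom of
generation `n ≥ n₀` is contained in a single continuity piece. -/
theorem atoms_in_single_piece {X : Type*} [MetricSpace X] [CompactSpace X] [LocallyConnectedSpace X] {N : ℕ}
    (f : X → X) (P : Fin N → Set X) (lam : ℝ)
    (hN : 2 ≤ N)
    (hne : ∀ i, (P i).Nonempty)
    (hop : ∀ i, IsOpen (P i))
    (hdisj : ∀ i j, i ≠ j → Disjoint (P i) (P j))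
    (hcov : (⋃ i, closure (P i)) = Set.univ)
    (hlam0 : 0 < lam) (hlam1 : lam < 1)
    (hctr : ∀ i, ∀ x ∈ P i, ∀ y ∈ P i, dist (f x) (f y) ≤ lam * dist x y)
    (htilde : (tildeSet f P).Nonempty)
    (hsep : (Set.univ \ ⋃ i, P i) = (∅ : Set X) ∨
      ∃ δ > 0, ∀ a ∈ Lam f P, ∀ b ∈ (Set.univ \ ⋃ i, P i), δ ≤ dist a b) :
    ∃ n₀ : ℕ, 1 ≤ n₀ ∧ ∀ l : List (Fin N), n₀ ≤ l.length → ∃ i, atomOf f P l ⊆ P i := by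
  have hlam0' : (0:ℝ) ≤ lam := hlam0.le
  -- Step 1: uniform radius r and threshold n₁
  obtain ⟨r, hr, n₁, hn₁⟩ :
      ∃ r > 0, ∃ n₁ : ℕ, ∀ n ≥ n₁, ∀ z ∈ LamN f P n, ∃ i, ball z r ⊆ P i := by
    rcases hsep with hemp | ⟨δ, hδ, hdist⟩
    · have hcovP : (Set.univ : Set X) ⊆ ⋃ i, P i := Set.diff_eq_empty.mp hemp
      obtain ⟨r, hr, hball⟩ := uniform_piece P hop hdisj isClosed_univ one_pos
        (fun a _ => (Set.subset_univ _).trans hcovP)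
      exact ⟨r, hr, 0, fun n _ z _ => hball z trivial⟩
    · have hLclosed : IsClosed (Lam f P) := by
        apply isClosed_biInter
        intro n hn
        obtain ⟨m, rfl⟩ := Nat.exists_eq_add_of_le hn
        rw [add_comm]
        exact isClosed_LamN f P m
      have hballδ : ∀ a ∈ Lam f P, ball a δ ⊆ ⋃ i, P i := by
        intro a ha b hb
        by_contra hbP
        have h1 : δ ≤ dist a b := hdist a ha b ⟨trivial, hbP⟩
        have h2 : dist b a < δ := mem_ball.mp hb
        rw [dist_comm] at h2
        linarith
      obtain ⟨r, hr, hball⟩ := uniform_piece P hop hdisj hLclosed hδ hballδ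
      obtain ⟨n₁, hn₁⟩ := eventually_LamN_subset f P
        (U := ⋃ a ∈ Lam f P, ball a (r / 2))
        (isOpen_biUnion fun _ _ => isOpen_ball)
        (fun a ha => Set.mem_biUnion ha (mem_ball_self (by linarith)))
      refine ⟨r / 2, by linarith, n₁, fun n hn z hz => ?_⟩
      obtain ⟨a, ha, hza⟩ := mem_iUnion₂.mp (hn₁ n hn hz)
      obtain ⟨i, hi⟩ := hball a ha
      refine ⟨i, fun w hw => hi (mem_ball.mpr ?_)⟩
      have h1 : dist w z < r / 2 := mem_ball.mp hw
      have h2 : dist z a < r / 2 := mem_ball.mp hza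
      calc dist w a ≤ dist w z + dist z a := dist_triangle _ _ _
        _ < r := by linarith
  -- Step 2: contraction makes atoms small
  set D := Metric.diam (Set.univ : Set X) with hD
  have hD0 : 0 ≤ D := Metric.diam_nonneg
  obtain ⟨n₂, hn₂⟩ : ∃ n₂ : ℕ, lam ^ n₂ * D < r := by
    obtain ⟨n, hn⟩ := exists_pow_lt_of_lt_one (show (0:ℝ) < r / (D + 1) by positivity) hlam1
    refine ⟨n, ?_⟩
    have hp : 0 < lam ^ n := pow_pos hlam0 n
    calc lam ^ n * D ≤ lam ^ n * (D + 1) := by nlinarith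
      _ < (r / (D + 1)) * (D + 1) := by
          apply mul_lt_mul_of_pos_right hn (by linarith)
      _ = r := by field_simp
  refine ⟨max (max n₁ n₂) 1, le_max_right _ _, fun l hl => ?_⟩
  have hn1 : n₁ ≤ l.length := le_trans ((le_max_left _ _).trans (le_max_left _ _)) hl
  have hn2 : n₂ ≤ l.length := le_trans ((le_max_right _ _).trans (le_max_left _ _)) hl
  rcases (atomOf f P l).eq_empty_or_nonempty with he | ⟨z, hz⟩
  · exact ⟨⟨0, by omega⟩, he ▸ Set.empty_subset _⟩
  · have hzL : z ∈ LamN f P l.length :=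
      Set.mem_biUnion (show l ∈ {l' : List (Fin N) | l'.length = l.length} from rfl) hz
    obtain ⟨i, hi⟩ := hn₁ l.length hn1 z hzL
    refine ⟨i, fun w hw => hi (mem_ball.mpr ?_)⟩
    have hdiam : Metric.diam (atomOf f P l) ≤ lam ^ l.length * D :=
      diam_foldl_atomStep f P hlam0' hctr l Set.univ
    have hb : Bornology.IsBounded (atomOf f P l) :=
      isCompact_univ.isBounded.subset (Set.subset_univ _)
    have h1 : dist w z ≤ lam ^ l.length * D :=
      le_trans (Metric.dist_le_diam_of_mem hb hw hz) hdiam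
    have hpow : lam ^ l.length ≤ lam ^ n₂ := pow_le_pow_of_le_one hlam0' hlam1.le hn2
    have h2 : lam ^ l.length * D ≤ lam ^ n₂ * D := mul_le_mul_of_nonneg_right hpow hD0
    linarith
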